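/- Suppose X = ∅. Let g ∈ G_n and h ∈ G_k. Then for every N ∈ ℕ, the commutator A_N[n,g] * A_N[k,h] − A_N[k,h] * A_N[n,g] lies in the complex linear span of the elements A_N[m,r] with m ≤ n + k − 1 and r ∈ G_m. -/

import Mathlib

/-!
Write `A_N[j,g] = S(g) / (N - j)!` with `S(x) = Σ_{σ ∈ K_N} σ x σ⁻¹`. Reindexing the double sum
gives `S(g) S(h) - S(h) S(g) = Σ_{τ ∈ K_N} (S(g · τhτ⁻¹) - S(τhτ⁻¹ · g))`. Since `X = ∅`, `g` and
`τhτ⁻¹` only move points on the levels `{0, …, n - 1}` and `τ{0, …, k - 1}` of `I × ℕ`. If these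
level sets are disjoint, the two products coincide; otherwise both products move only points on
fewer than `n + k` levels, and conjugating by a further element of `K_N` that moves these levels
to an initial segment `{0, …, m - 1}` identifies `S` of each product with `(N - m)! A_N[m, r]` for
some `r ∈ G_m`.
-/

noncomputable section

/-- Embedding of permutations of `ℕ` into permutations of `V = X ⊕ (I × ℕ)`,
acting trivially on `X` and on the first factor of `I × ℕ`.  It restricts to an
embedding of `S_∞` into `S(V)`. -/
def embNat (I X : Type*) (τ : Equiv.Perm ℕ) : Equiv.Perm (X ⊕ I × ℕ) :=
  Equiv.sumCongr (Equiv.refl X) (Equiv.prodCongr (Equiv.refl I) τ)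

/-- `τ` fixes every `m ≥ n`, i.e. `τ` belongs to the subgroup `S_n ≤ S_∞`. -/
def fixesFrom (n : ℕ) (τ : Equiv.Perm ℕ) : Prop := ∀ m : ℕ, n ≤ m → τ m = m

/-- `G_n`: the set of elements of `G_∞` fixing every point of `V ∖ V_n`. -/
def Gset {I X : Type*} (Ginf : Subgroup (Equiv.Perm (X ⊕ I × ℕ))) (n : ℕ) :
    Set (Equiv.Perm (X ⊕ I × ℕ)) :=
  {g | g ∈ Ginf ∧ ∀ (i : I) (m : ℕ), n ≤ m → g (Sum.inr (i, m)) = Sum.inr (i, m)}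

/-- `K_n`-conjugacy of elements of `S(V)`:  `g' = κ g κ⁻¹` for some `κ ∈ K_n`,
where `K_n` is the image of `S_n` in `S(V)`. -/
def Kconj {I X : Type*} (n : ℕ) (g g' : Equiv.Perm (X ⊕ I × ℕ)) : Prop :=
  ∃ τ : Equiv.Perm ℕ, fixesFrom n τ ∧ g' = embNat I X τ * g * (embNat I X τ)⁻¹

/-- A permutation of `Fin N` extended to `ℕ` and then to `V`; these elements
form exactly the subgroup `K_N ≤ S(V)`. -/
def embFin (I X : Type*) (N : ℕ) (σ : Equiv.Perm (Fin N)) : Equiv.Perm (X ⊕ I × ℕ) :=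
  embNat I X (σ.extendDomain Fin.equivSubtype)

/-- The element `A_N[j,g] = (1/(N−j)!) Σ_{τ ∈ K_N} τ g τ⁻¹` of `ℂ[G_∞]`
(and `A_N[j,g] = 0` for `j > N`). -/
def AN (I X : Type*) (N j : ℕ) (g : Equiv.Perm (X ⊕ I × ℕ)) :
    MonoidAlgebra ℂ (Equiv.Perm (X ⊕ I × ℕ)) :=
  if j ≤ N then
    ((Nat.factorial (N - j) : ℂ))⁻¹ •
      ∑ σ : Equiv.Perm (Fin N),
        MonoidAlgebra.of ℂ (Equiv.Perm (X ⊕ I × ℕ))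
          (embFin I X N σ * g * (embFin I X N σ)⁻¹)
  else 0

open Equiv Finset

section

variable {I X : Type*}

def embNatHom (I X : Type*) : Perm ℕ →* Perm (X ⊕ I × ℕ) where
  toFun := embNat I X
  map_one' := by ext (x | ⟨i, m⟩) <;> rfl
  map_mul' τ ρ := by ext (x | ⟨i, m⟩) <;> rfl

@[simp]
lemma embNat_apply_inr (τ : Perm ℕ) (i : I) (b : ℕ) :
    embNat I X τ (Sum.inr (i, b)) = Sum.inr (i, τ b) := rfl

lemma embNat_inv (τ : Perm ℕ) : (embNat I X τ)⁻¹ = embNat I X τ⁻¹ :=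
  (map_inv (embNatHom I X) τ).symm

lemma extendDomain_finEquivSubtype_of_lt {N b : ℕ} (σ : Perm (Fin N)) (hb : b < N) :
    σ.extendDomain Fin.equivSubtype b = σ ⟨b, hb⟩ := by
  rw [Perm.extendDomain_apply_subtype _ Fin.equivSubtype hb]; rfl

lemma extendDomain_finEquivSubtype_of_le {N b : ℕ} (σ : Perm (Fin N)) (hb : N ≤ b) :
    σ.extendDomain Fin.equivSubtype b = b :=
  Perm.extendDomain_apply_not_subtype _ _ hb.not_gt

def finConj (I X : Type*) (N : ℕ) : Perm (Fin N) →* MulAut (Perm (X ⊕ I × ℕ)) :=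
  MulAut.conj.comp ((embNatHom I X).comp (Perm.extendDomainHom Fin.equivSubtype))

lemma finConj_apply {N : ℕ} (σ : Perm (Fin N)) (x : Perm (X ⊕ I × ℕ)) :
    finConj I X N σ x = embFin I X N σ * x * (embFin I X N σ)⁻¹ := rfl

def sumConj (I X : Type*) (N : ℕ) (x : Perm (X ⊕ I × ℕ)) :
    MonoidAlgebra ℂ (Perm (X ⊕ I × ℕ)) :=
  ∑ σ : Perm (Fin N), MonoidAlgebra.of ℂ _ (finConj I X N σ x)

lemma AN_of_le {N j : ℕ} (hj : j ≤ N) (x : Perm (X ⊕ I × ℕ)) :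
    AN I X N j x = ((N - j).factorial : ℂ)⁻¹ • sumConj I X N x := by
  rw [AN, if_pos hj]; rfl

lemma AN_of_lt {N j : ℕ} (hj : N < j) (x : Perm (X ⊕ I × ℕ)) : AN I X N j x = 0 :=
  if_neg hj.not_ge

lemma sumConj_finConj {N : ℕ} (σ : Perm (Fin N)) (x : Perm (X ⊕ I × ℕ)) :
    sumConj I X N (finConj I X N σ x) = sumConj I X N x :=
  Fintype.sum_equiv (Equiv.mulRight σ) _ _ fun τ => by simp [MulAut.mul_apply]

lemma sumConj_mul_sumConj (N : ℕ) (x y : Perm (X ⊕ I × ℕ)) :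
    sumConj I X N x * sumConj I X N y = ∑ τ, sumConj I X N (x * finConj I X N τ y) := by
  simp only [sumConj, sum_mul_sum, ← map_mul]
  refine (sum_congr rfl fun σ _ => ?_).trans sum_comm
  refine (Fintype.sum_equiv (Equiv.mulLeft σ) _ _ fun τ => ?_).symm
  simp [MulAut.mul_apply]

lemma sumConj_commutator (N : ℕ) (x y : Perm (X ⊕ I × ℕ)) :
    sumConj I X N x * sumConj I X N y - sumConj I X N y * sumConj I X N x
      = ∑ τ, (sumConj I X N (x * finConj I X N τ y) - sumConj I X N (finConj I X N τ y * x)) := by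
  rw [sumConj_mul_sumConj, sum_sub_distrib, sumConj_mul_sumConj]
  congr 1
  refine Fintype.sum_equiv (Equiv.inv _) _ _ fun τ => ?_
  rw [← sumConj_finConj τ⁻¹ (y * _), map_mul, Equiv.inv_apply, ← MulAut.mul_apply, ← map_mul,
    inv_mul_cancel, map_one, MulAut.one_apply]

def SupportedOnLevels (z : Perm (X ⊕ I × ℕ)) (S : Set ℕ) : Prop :=
  ∀ (i : I) (b : ℕ), b ∉ S → z (Sum.inr (i, b)) = Sum.inr (i, b)

namespace SupportedOnLevels

variable {z w : Perm (X ⊕ I × ℕ)} {S T : Set ℕ}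

lemma mono (hz : SupportedOnLevels z S) (hST : S ⊆ T) : SupportedOnLevels z T :=
  fun i b hb => hz i b fun h => hb (hST h)

lemma mul (hz : SupportedOnLevels z S) (hw : SupportedOnLevels w S) :
    SupportedOnLevels (z * w) S := fun i b hb => by
  rw [Perm.mul_apply, hw i b hb, hz i b hb]

lemma conj (hz : SupportedOnLevels z S) (τ : Perm ℕ) :
    SupportedOnLevels (embNat I X τ * z * (embNat I X τ)⁻¹) (τ '' S) := fun i b hb => by
  have hb' : τ⁻¹ b ∉ S := fun h => hb ⟨_, h, by simp⟩
  rw [embNat_inv, Perm.mul_apply, Perm.mul_apply, embNat_apply_inr, hz i _ hb', embNat_apply_inr,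
    Perm.inv_def, Equiv.apply_symm_apply]

lemma commute [IsEmpty X] (hz : SupportedOnLevels z S) (hw : SupportedOnLevels w T)
    (hST : Disjoint S T) : Commute z w := by
  refine Perm.Disjoint.commute fun v => ?_
  rcases v with x | ⟨i, b⟩
  · exact isEmptyElim x
  by_cases hb : b ∈ S
  · exact .inr (hw i b (Set.disjoint_left.mp hST hb))
  · exact .inl (hz i b hb)

end SupportedOnLevels

lemma mem_Gset_iff {Ginf : Subgroup (Perm (X ⊕ I × ℕ))} {n : ℕ} {g : Perm (X ⊕ I × ℕ)} :
    g ∈ Gset Ginf n ↔ g ∈ Ginf ∧ SupportedOnLevels g (Set.Iio n) := by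
  simp [Gset, SupportedOnLevels]

lemma exists_perm_fin_lt_card {N : ℕ} (S : Finset (Fin N)) :
    ∃ σ : Perm (Fin N), ∀ i ∈ S, (σ i : ℕ) < #S := by
  classical
  have hcard : Fintype.card S = Fintype.card ({i : Fin N | (i : ℕ) < #S} : Finset (Fin N)) := by
    rw [Fintype.card_coe, Fintype.card_coe, Fin.card_filter_val_lt,
      min_eq_right (by simpa using S.card_le_univ)]
  refine ⟨(Fintype.equivOfCardEq hcard).extendSubtype, fun i hi => ?_⟩
  simpa using (Fintype.equivOfCardEq hcard).extendSubtype_mem i hi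

lemma exists_perm_extendDomain_lt_card {N : ℕ} (U : Finset ℕ) (hU : ∀ b ∈ U, b < N) :
    ∃ σ : Perm (Fin N), ∀ b ∈ U, σ.extendDomain Fin.equivSubtype b < #U := by
  obtain ⟨σ, hσ⟩ := exists_perm_fin_lt_card (U.attachFin hU)
  refine ⟨σ, fun b hb => ?_⟩
  rw [extendDomain_finEquivSubtype_of_lt σ (hU b hb), ← card_attachFin U hU]
  exact hσ _ (mem_attachFin hU |>.mpr hb)

variable {Ginf : Subgroup (Perm (X ⊕ I × ℕ))} {N : ℕ}

lemma embFin_mem (hGS : ∀ τ : Perm ℕ, {m : ℕ | τ m ≠ m}.Finite → embNat I X τ ∈ Ginf)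
    (σ : Perm (Fin N)) : embFin I X N σ ∈ Ginf :=
  hGS _ <| (Set.finite_Iio N).subset fun _ hb =>
    not_le.mp fun hNb => hb (extendDomain_finEquivSubtype_of_le σ hNb)

lemma finConj_mem (hK : ∀ σ : Perm (Fin N), embFin I X N σ ∈ Ginf) (σ : Perm (Fin N))
    {z : Perm (X ⊕ I × ℕ)} (hz : z ∈ Ginf) : finConj I X N σ z ∈ Ginf :=
  mul_mem (mul_mem (hK σ) hz) (inv_mem (hK σ))

variable (Ginf N) in
def spanAN (d : ℕ) : Submodule ℂ (MonoidAlgebra ℂ (Perm (X ⊕ I × ℕ))) :=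
  Submodule.span ℂ {x | ∃ m : ℕ, m < d ∧ ∃ r ∈ Gset Ginf m, x = AN I X N m r}

lemma sumConj_mem_spanAN (hK : ∀ σ : Perm (Fin N), embFin I X N σ ∈ Ginf)
    {z : Perm (X ⊕ I × ℕ)} (hz : z ∈ Ginf) {U : Finset ℕ} (hUN : ∀ b ∈ U, b < N)
    (hzU : SupportedOnLevels z U) {d : ℕ} (hUd : #U < d) :
    sumConj I X N z ∈ spanAN Ginf N d := by
  obtain ⟨σ, hσ⟩ := exists_perm_extendDomain_lt_card U hUN
  have hr : finConj I X N σ z ∈ Gset Ginf #U := mem_Gset_iff.mpr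
    ⟨finConj_mem hK σ hz, (hzU.conj _).mono (Set.image_subset_iff.mpr hσ)⟩
  have hUN' : #U ≤ N := by
    simpa using card_le_card (show U ⊆ range N from fun b hb => mem_range.mpr (hUN b hb))
  have hfac : ((N - #U).factorial : ℂ) ≠ 0 := Nat.cast_ne_zero.mpr (Nat.factorial_ne_zero _)
  rw [← sumConj_finConj σ, ← smul_inv_smul₀ hfac (sumConj I X N _), ← AN_of_le hUN']
  exact Submodule.smul_mem _ _ (Submodule.subset_span ⟨_, hUd, _, hr, rfl⟩)

lemma sumConj_commutator_term_mem_spanAN [IsEmpty X]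
    (hK : ∀ σ : Perm (Fin N), embFin I X N σ ∈ Ginf) {n k : ℕ} {g h : Perm (X ⊕ I × ℕ)}
    (hg : g ∈ Gset Ginf n) (hh : h ∈ Gset Ginf k) (hn : n ≤ N) (hk : k ≤ N)
    (τ : Perm (Fin N)) :
    sumConj I X N (g * finConj I X N τ h) - sumConj I X N (finConj I X N τ h * g)
      ∈ spanAN Ginf N (n + k) := by
  obtain ⟨hgG, hgS⟩ := mem_Gset_iff.mp hg
  obtain ⟨hhG, hhS⟩ := mem_Gset_iff.mp hh
  set τ' := τ.extendDomain Fin.equivSubtype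
  have hwS : SupportedOnLevels (finConj I X N τ h) (τ' '' Set.Iio k) := hhS.conj τ'
  by_cases hdisj : Disjoint (range n) ((range k).image τ')
  · have hST : Disjoint (Set.Iio n) (τ' '' Set.Iio k) := by
      simpa using Finset.disjoint_coe.mpr hdisj
    rw [(hgS.commute hwS hST).eq, sub_self]
    exact zero_mem _
  set U := range n ∪ (range k).image τ'
  have hU : (U : Set ℕ) = Set.Iio n ∪ τ' '' Set.Iio k := by simp [U]
  have hcard : #U < n + k := by
    have hunion : #U + #(range n ∩ (range k).image τ') = n + k := by
      rw [card_union_add_card_inter, card_range, card_image_of_injective _ τ'.injective,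
        card_range]
    have hinter := (not_disjoint_iff_nonempty_inter.mp hdisj).card_pos
    omega
  have hUN : ∀ b ∈ U, b < N := by
    simp only [U, mem_union, mem_range, mem_image]
    rintro b (hb | ⟨a, ha, rfl⟩)
    · omega
    · rw [extendDomain_finEquivSubtype_of_lt τ (by omega)]
      exact Fin.is_lt _
  have hgU : SupportedOnLevels g U := hU ▸ hgS.mono Set.subset_union_left
  have hwU : SupportedOnLevels (finConj I X N τ h) U := hU ▸ hwS.mono Set.subset_union_right
  have hwG := finConj_mem hK τ hhG
  exact sub_mem (sumConj_mem_spanAN hK (mul_mem hgG hwG) hUN (hgU.mul hwU) hcard)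
    (sumConj_mem_spanAN hK (mul_mem hwG hgG) hUN (hwU.mul hgU) hcard)

end

theorem commutator_AN_mem_span_general
    {I X : Type*} [IsEmpty X]
    (Ginf : Subgroup (Equiv.Perm (X ⊕ I × ℕ)))
    (hGS : ∀ τ : Equiv.Perm ℕ, {m : ℕ | τ m ≠ m}.Finite → embNat I X τ ∈ Ginf)
    (n k : ℕ) (g h : Equiv.Perm (X ⊕ I × ℕ))
    (hg : g ∈ Gset Ginf n) (hh : h ∈ Gset Ginf k) (N : ℕ) :
    AN I X N n g * AN I X N k h - AN I X N k h * AN I X N n g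
      ∈ Submodule.span ℂ
          {x : MonoidAlgebra ℂ (Equiv.Perm (X ⊕ I × ℕ)) |
            ∃ m : ℕ, m < n + k ∧ ∃ r ∈ Gset Ginf m, x = AN I X N m r} := by
  change _ ∈ spanAN Ginf N (n + k)
  rcases lt_or_ge N n with hn | hn
  · simp [AN_of_lt hn]
  rcases lt_or_ge N k with hk | hk
  · simp [AN_of_lt hk]
  rw [AN_of_le hn, AN_of_le hk, smul_mul_smul_comm, smul_mul_smul_comm,
    mul_comm ((N - k).factorial : ℂ)⁻¹, ← smul_sub, sumConj_commutator]
  exact Submodule.smul_mem _ _ <| Submodule.sum_mem _ fun τ _ =>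
    sumConj_commutator_term_mem_spanAN (embFin_mem hGS) hg hh hn hk τ

/-- Suppose `X = ∅`.  For `g ∈ G_n`, `h ∈ G_k` and every `N`, the commutator
`A_N[n,g] * A_N[k,h] − A_N[k,h] * A_N[n,g]` lies in the complex linear span of the
elements `A_N[m,r]` with `m ≤ n + k − 1` (i.e. `m < n + k`) and `r ∈ G_m`. -/
theorem commutator_AN_mem_span
    {I X : Type*} [Finite I] [IsEmpty X]
    (Ginf : Subgroup (Equiv.Perm (X ⊕ I × ℕ)))
    (hGfs : ∀ g ∈ Ginf, {v : X ⊕ I × ℕ | g v ≠ v}.Finite)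
    (hGS : ∀ τ : Equiv.Perm ℕ, {m : ℕ | τ m ≠ m}.Finite → embNat I X τ ∈ Ginf)
    (n k : ℕ) (g h : Equiv.Perm (X ⊕ I × ℕ))
    (hg : g ∈ Gset Ginf n) (hh : h ∈ Gset Ginf k) (N : ℕ) :
    AN I X N n g * AN I X N k h - AN I X N k h * AN I X N n g
      ∈ Submodule.span ℂ
          {x : MonoidAlgebra ℂ (Equiv.Perm (X ⊕ I × ℕ)) |
            ∃ m : ℕ, m < n + k ∧ ∃ r ∈ Gset Ginf m, x = AN I X N m r} :=
  commutator_AN_mem_span_general Ginf hGS n k g h hg hh N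

end
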